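/- arXiv:2007.07990 — 4 statements merged into one kernel-verified Lean document; each statement's English description precedes it below -/
import Mathlib

section
/- For each positive integer k there exists a unique lambda_k > 0 such that, for X ~ Poisson(lambda_k), (1/k) * E[min(X,k)] = P[X <= k-1]. -/
/-- The probability mass function of a Poisson random variable with rate `l`. -/
noncomputable def poissonPMF (l : ℝ) (j : ℕ) : ℝ := Real.exp (-l) * l ^ j / (Nat.factorial j)

/-- `mu_k(X) = E[min(X,k)]/k` for `X ~ Poisson(l)`. -/
noncomputable def muPoisson (k : ℕ) (l : ℝ) : ℝ :=
  (1 / k) * ∑' j : ℕ, (↑(min j k) : ℝ) * poissonPMF l j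

/-- `delta_k(X) = P[X ≤ k-1]` for `X ~ Poisson(l)`. -/
noncomputable def deltaPoisson (k : ℕ) (l : ℝ) : ℝ := ∑ j ∈ Finset.range k, poissonPMF l j

/-! Writing `min X k = ∑_{i<k} 1[X > i]` gives `E[min(X,k)] = ∑_{i<k} (1 - P[X ≤ i])`. Since
`d/dλ P[X ≤ n] = -P[X = n] < 0`, every `P[X ≤ i]` is strictly decreasing in `λ`, so `μ_k - δ_k` is
strictly increasing on `[0, ∞)`. It equals `-1` at `λ = 0` and tends to `1` as `λ → ∞`, so it has
exactly one zero, which is positive. -/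

open Filter Topology Set Finset Nat

lemma hasSum_poissonPMF (l : ℝ) : HasSum (poissonPMF l) 1 := by
  have h := (NormedSpace.expSeries_div_hasSum_exp l).mul_left (Real.exp (-l))
  rw [← Real.exp_eq_exp_ℝ, ← Real.exp_add, neg_add_cancel, Real.exp_zero] at h
  exact h.congr_fun fun j => mul_div_assoc ..

lemma poissonPMF_pos {l : ℝ} (hl : 0 < l) (j : ℕ) : 0 < poissonPMF l j := by
  unfold poissonPMF; positivity

lemma continuous_poissonPMF (j : ℕ) : Continuous fun l => poissonPMF l j := by
  unfold poissonPMF; fun_prop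

lemma hasDerivAt_poissonPMF_zero (l : ℝ) :
    HasDerivAt (fun l => poissonPMF l 0) (-poissonPMF l 0) l := by
  simpa [poissonPMF] using (hasDerivAt_neg l).exp

lemma hasDerivAt_poissonPMF_succ (j : ℕ) (l : ℝ) :
    HasDerivAt (fun l => poissonPMF l (j + 1)) (poissonPMF l j - poissonPMF l (j + 1)) l := by
  have hexp : HasDerivAt (fun l => Real.exp (-l)) (-Real.exp (-l)) l := by
    simpa using (hasDerivAt_neg l).exp
  refine ((hexp.fun_mul (hasDerivAt_pow (j + 1) l)).div_const ((j + 1)! : ℝ)).congr_deriv ?_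
  simp only [poissonPMF, Nat.factorial_succ, add_tsub_cancel_right]
  push_cast
  field_simp
  ring

lemma hasDerivAt_deltaPoisson_succ (n : ℕ) (l : ℝ) :
    HasDerivAt (deltaPoisson (n + 1)) (-poissonPMF l n) l := by
  induction n with
  | zero =>
    have h : deltaPoisson 1 = fun l => poissonPMF l 0 := by funext l; simp [deltaPoisson]
    exact h ▸ hasDerivAt_poissonPMF_zero l
  | succ n ih =>
    have h : deltaPoisson (n + 2) = fun l => deltaPoisson (n + 1) l + poissonPMF l (n + 1) := by
      funext l; exact sum_range_succ _ _
    rw [h]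
    exact (ih.fun_add (hasDerivAt_poissonPMF_succ n l)).congr_deriv (by ring)

@[fun_prop]
lemma continuous_deltaPoisson (n : ℕ) : Continuous (deltaPoisson n) :=
  continuous_finsetSum _ fun j _ => continuous_poissonPMF j

lemma deltaPoisson_succ_zero (n : ℕ) : deltaPoisson (n + 1) 0 = 1 := by
  simp [deltaPoisson, poissonPMF, sum_range_succ']

lemma deltaPoisson_strictAntiOn (n : ℕ) : StrictAntiOn (deltaPoisson (n + 1)) (Ici 0) := by
  refine strictAntiOn_of_deriv_neg (convex_Ici 0) (continuous_deltaPoisson _).continuousOn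
    fun l hl => ?_
  rw [interior_Ici] at hl
  rw [(hasDerivAt_deltaPoisson_succ n l).deriv, neg_lt_zero]
  exact poissonPMF_pos hl n

lemma tendsto_deltaPoisson_atTop (n : ℕ) : Tendsto (deltaPoisson n) atTop (𝓝 0) := by
  have h (j : ℕ) : Tendsto (fun l => poissonPMF l j) atTop (𝓝 0) := by
    simpa [poissonPMF, mul_comm] using
      (Real.tendsto_pow_mul_exp_neg_atTop_nhds_zero j).div_const (j ! : ℝ)
  have hsum := tendsto_finsetSum (range n) fun j _ => h j
  rw [sum_const_zero] at hsum
  exact hsum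

lemma min_eq_sum_range_ite (j k : ℕ) : min j k = ∑ i ∈ range k, if i < j then 1 else 0 := by
  induction k with
  | zero => simp
  | succ k ih =>
    rw [sum_range_succ, ← ih]
    split_ifs <;> omega

lemma hasSum_ite_lt_poissonPMF (i : ℕ) (l : ℝ) :
    HasSum (fun j => if i < j then poissonPMF l j else 0) (1 - deltaPoisson (i + 1) l) := by
  have hhead : HasSum (fun j => if j ∈ range (i + 1) then poissonPMF l j else 0)
      (deltaPoisson (i + 1) l) := by
    have h : HasSum (fun j => if j ∈ range (i + 1) then poissonPMF l j else 0)
        (∑ j ∈ range (i + 1), if j ∈ range (i + 1) then poissonPMF l j else 0) :=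
      hasSum_sum_of_ne_finset_zero fun j hj => if_neg hj
    rwa [sum_congr rfl fun j hj => if_pos hj] at h
  refine ((hasSum_poissonPMF l).sub hhead).congr_fun fun j => ?_
  by_cases hij : i < j
  · simp [hij, show ¬j < i + 1 by omega]
  · simp [hij, show j < i + 1 by omega]

lemma muPoisson_eq_sum_deltaPoisson (k : ℕ) (l : ℝ) :
    muPoisson k l = (1 / k) * ∑ i ∈ range k, (1 - deltaPoisson (i + 1) l) := by
  rw [muPoisson, ← (hasSum_sum fun i _ => hasSum_ite_lt_poissonPMF i l).tsum_eq]
  congr 2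
  funext j
  rw [min_eq_sum_range_ite, Nat.cast_sum, sum_mul]
  simp only [Nat.cast_ite, Nat.cast_one, Nat.cast_zero, ite_mul, one_mul, zero_mul]

lemma continuous_muPoisson (k : ℕ) : Continuous (muPoisson k) := by
  simp only [funext (muPoisson_eq_sum_deltaPoisson k)]
  fun_prop

lemma muPoisson_zero (k : ℕ) : muPoisson k 0 = 0 := by
  simp [muPoisson_eq_sum_deltaPoisson, deltaPoisson_succ_zero]

lemma tendsto_muPoisson_atTop {k : ℕ} (hk : k ≠ 0) : Tendsto (muPoisson k) atTop (𝓝 1) := by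
  have h : Tendsto (fun l => (1 / k : ℝ) * ∑ i ∈ range k, (1 - deltaPoisson (i + 1) l)) atTop
      (𝓝 ((1 / k : ℝ) * ∑ i ∈ range k, (1 - 0))) :=
    (tendsto_finsetSum _ fun i _ => (tendsto_deltaPoisson_atTop (i + 1)).const_sub 1).const_mul _
  rw [funext (muPoisson_eq_sum_deltaPoisson k)]
  convert h using 2
  simp [hk]

lemma muPoisson_strictMonoOn {k : ℕ} (hk : k ≠ 0) : StrictMonoOn (muPoisson k) (Ici 0) := by
  intro x hx y hy hxy
  rw [muPoisson_eq_sum_deltaPoisson, muPoisson_eq_sum_deltaPoisson]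
  refine mul_lt_mul_of_pos_left (sum_lt_sum_of_nonempty (nonempty_range_iff.2 hk) fun i _ => ?_)
    (by positivity)
  exact sub_lt_sub_left (deltaPoisson_strictAntiOn i hx hy hxy) 1

/-- For each positive integer `k` there exists a unique `λ_k > 0` such that for
`X ~ Poisson(λ_k)` we have `(1/k) E[min(X,k)] = P[X ≤ k-1]`. -/
theorem stmt_4 (k : ℕ) (hk : 0 < k) :
    ∃! l : ℝ, 0 < l ∧ muPoisson k l = deltaPoisson k l := by
  obtain ⟨n, rfl⟩ := Nat.exists_eq_add_one_of_ne_zero hk.ne'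
  set F : ℝ → ℝ := fun l => muPoisson (n + 1) l - deltaPoisson (n + 1) l
  have hF_zero : F 0 = -1 := by simp [F, muPoisson_zero, deltaPoisson_succ_zero]
  have hF_mono : StrictMonoOn F (Ici 0) := fun x hx y hy hxy =>
    sub_lt_sub (muPoisson_strictMonoOn n.succ_ne_zero hx hy hxy)
      (deltaPoisson_strictAntiOn n hx hy hxy)
  have hF_cont : Continuous F := (continuous_muPoisson _).sub (continuous_deltaPoisson _)
  have hF_lim : Tendsto F atTop (𝓝 1) := by
    simpa using (tendsto_muPoisson_atTop n.succ_ne_zero).sub (tendsto_deltaPoisson_atTop (n + 1))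
  obtain ⟨b, hFb, hb⟩ := ((hF_lim.eventually_const_lt one_pos).and (eventually_ge_atTop 0)).exists
  obtain ⟨c, hc, hFc⟩ : ∃ c ∈ Icc 0 b, F c = 0 :=
    intermediate_value_Icc hb hF_cont.continuousOn ⟨by rw [hF_zero]; norm_num, hFb.le⟩
  have hc_pos : 0 < c := hc.1.lt_of_ne (by rintro rfl; norm_num [hF_zero] at hFc)
  refine ⟨c, ⟨hc_pos, sub_eq_zero.1 hFc⟩, fun y ⟨hy, hFy⟩ => ?_⟩
  exact hF_mono.injOn hy.le hc.1 ((sub_eq_zero.2 hFy).trans hFc.symm)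
end

section
/- Let n_r >= k' >= 3 and r in (0,1). Define Q_i = C(n_r - 1, k' - i) (1-r)^{k'-i} r^{n_r - k' + i - 1} for i = 1, 2, and Q_{>=3} = sum_{i>=3} C(n_r - 1, k' - i) (1-r)^{k'-i} r^{n_r - k' + i - 1}. Then Q_2^2 - Q_{>=3} (Q_1 - Q_2) > 0. -/
/-!
Each `Q i` is the binomial term `C(N, j) (1-r)^j r^(N-j)` with `N = n_r - 1`, `j = k' - i`.
Log-concavity of binomial coefficients gives `Q (i+1) * Q 1 ≤ Q i * Q 2` for `i ≥ 2`.
Summing these over `2 ≤ i < k'` telescopes to `Q 1 * S ≤ Q 2 * (Q 2 + S - Q k')`, where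
`S = ∑_{i ≥ 3} Q i`, i.e. `S (Q 1 - Q 2) ≤ Q 2 ^ 2 - Q 2 * Q k' < Q 2 ^ 2`.
-/

open Finset

theorem Nat.choose_mul_choose_succ_le_choose_succ_mul_choose (N : ℕ) {a b : ℕ} (hab : a ≤ b) :
    N.choose a * N.choose (b + 1) ≤ N.choose (a + 1) * N.choose b := by
  refine Nat.le_of_mul_le_mul_right ?_ (by positivity : 0 < (a + 1) * (b + 1))
  have ha := Nat.choose_succ_right_eq N a
  have hb := Nat.choose_succ_right_eq N b
  calc N.choose a * N.choose (b + 1) * ((a + 1) * (b + 1))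
      = N.choose a * N.choose b * ((N - b) * (a + 1)) := by
        linear_combination (N.choose a * (a + 1)) * hb
    _ ≤ N.choose a * N.choose b * ((N - a) * (b + 1)) := by gcongr
    _ = N.choose (a + 1) * N.choose b * ((a + 1) * (b + 1)) := by
        linear_combination (N.choose b * (b + 1)) * ha.symm

def binomialTerm (N : ℕ) (x y : ℝ) (j : ℕ) : ℝ := N.choose j * x ^ j * y ^ (N - j)

theorem binomialTerm_pos {N j : ℕ} {x y : ℝ} (hx : 0 < x) (hy : 0 < y) (hj : j ≤ N) :
    0 < binomialTerm N x y j := by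
  have := Nat.choose_pos hj
  unfold binomialTerm
  positivity

theorem binomialTerm_mul_succ_le_succ_mul {N a b : ℕ} {x y : ℝ} (hx : 0 ≤ x) (hy : 0 ≤ y) (hab : a ≤ b) :
    binomialTerm N x y a * binomialTerm N x y (b + 1) ≤
      binomialTerm N x y (a + 1) * binomialTerm N x y b := by
  unfold binomialTerm
  rcases lt_or_ge b N with hbN | hNb
  · obtain ⟨d, rfl⟩ := Nat.exists_eq_add_of_le hab
    obtain ⟨m, rfl⟩ := Nat.exists_eq_add_of_lt hbN
    set N := a + d + m + 1
    have hc : (N.choose a * N.choose (a + d + 1) : ℝ) ≤ N.choose (a + 1) * N.choose (a + d) := by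
      exact_mod_cast Nat.choose_mul_choose_succ_le_choose_succ_mul_choose _ (Nat.le_add_right a d)
    rw [show N - a = d + m + 1 by omega, show N - (a + d + 1) = m by omega,
      show N - (a + 1) = d + m by omega, show N - (a + d) = m + 1 by omega]
    calc _ = (N.choose a * N.choose (a + d + 1) : ℝ) * (x ^ (2 * a + d + 1) * y ^ (d + 2 * m + 1)) := by
          ring
      _ ≤ (N.choose (a + 1) * N.choose (a + d) : ℝ) * (x ^ (2 * a + d + 1) * y ^ (d + 2 * m + 1)) := by
          gcongr
      _ = _ := by ring
  · rw [Nat.choose_eq_zero_of_lt (by omega : N < b + 1)]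
    simp only [Nat.cast_zero, zero_mul, mul_zero]
    positivity

theorem sum_Icc_mul_sub_lt_sq {Q : ℕ → ℝ} {k : ℕ} (hk : 2 ≤ k)
    (hratio : ∀ i ∈ Ico 2 k, Q (i + 1) * Q 1 ≤ Q i * Q 2) (hQ2 : 0 < Q 2) (hQk : 0 < Q k) :
    (∑ i ∈ Icc 3 k, Q i) * (Q 1 - Q 2) < Q 2 ^ 2 := by
  have hshift : ∑ i ∈ Ico 2 k, Q (i + 1) = ∑ i ∈ Icc 3 k, Q i := by
    rw [sum_Ico_add' Q 2 k 1]; rfl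
  have hsplit : ∑ i ∈ Ico 2 k, Q i + Q k = Q 2 + ∑ i ∈ Icc 3 k, Q i := by
    rw [← sum_Ico_succ_top hk, sum_eq_sum_Ico_succ_bot (by omega)]; rfl
  have hsum := sum_le_sum hratio
  rw [← sum_mul, ← sum_mul, hshift] at hsum
  nlinarith [mul_pos hQ2 hQk]

theorem stmt_11_general (nr k' : ℕ) (hk : 3 ≤ k') (hn : k' ≤ nr)
    (r : ℝ) (hr0 : 0 < r) (hr1 : r < 1)
    (Q : ℕ → ℝ)
    (hQ : ∀ i, 1 ≤ i → i ≤ k' →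
      Q i = (Nat.choose (nr - 1) (k' - i) : ℝ) * (1 - r) ^ (k' - i) * r ^ (nr - k' + i - 1)) :
    0 < Q 2 ^ 2 - (∑ i ∈ Finset.Icc 3 k', Q i) * (Q 1 - Q 2) := by
  have hQterm : ∀ i, 1 ≤ i → i ≤ k' → Q i = binomialTerm (nr - 1) (1 - r) r (k' - i) := by
    intro i hi1 hik
    rw [hQ i hi1 hik, binomialTerm, show nr - 1 - (k' - i) = nr - k' + i - 1 by omega]
  refine sub_pos.2 (sum_Icc_mul_sub_lt_sq (by omega) (fun i hi ↦ ?_) ?_ ?_)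
  · rw [mem_Ico] at hi
    rw [hQterm (i + 1) (by omega) (by omega), hQterm 1 le_rfl (by omega),
      hQterm i (by omega) (by omega), hQterm 2 (by omega) (by omega),
      show k' - 1 = k' - 2 + 1 by omega, show k' - i = k' - (i + 1) + 1 by omega]
    exact binomialTerm_mul_succ_le_succ_mul (sub_nonneg.2 hr1.le) hr0.le (by omega)
  · rw [hQterm 2 (by omega) (by omega)]
    exact binomialTerm_pos (sub_pos.2 hr1) hr0 (by omega)
  · rw [hQterm k' (by omega) le_rfl]
    exact binomialTerm_pos (sub_pos.2 hr1) hr0 (by omega)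

/-- Let `n_r ≥ k' ≥ 3` and `r ∈ (0,1)`. With
`Q i = C(n_r - 1, k' - i) (1-r)^(k'-i) r^(n_r - k' + i - 1)` for `1 ≤ i ≤ k'`
(and `Q i = 0` for `i > k'`), letting `Q₃ = ∑_{i ≥ 3} Q i`, we have
`Q 2 ^ 2 - Q₃ (Q 1 - Q 2) > 0`. -/
theorem stmt_11 (nr k' : ℕ) (hk : 3 ≤ k') (hn : k' ≤ nr)
    (r : ℝ) (hr0 : 0 < r) (hr1 : r < 1)
    (Q : ℕ → ℝ)
    (hQ : ∀ i, 1 ≤ i → i ≤ k' →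
      Q i = (Nat.choose (nr - 1) (k' - i) : ℝ) * (1 - r) ^ (k' - i) * r ^ (nr - k' + i - 1))
    (hQ0 : ∀ i, k' < i → Q i = 0) :
    0 < Q 2 ^ 2 - (∑ i ∈ Finset.Icc 3 k', Q i) * (Q 1 - Q 2) :=
  stmt_11_general nr k' hk hn r hr0 hr1 Q hQ
end

section
/- Fix a positive integer k and reals Q_1 > 0, Q_2 > 0, Q_{>=3} >= 0 with Q_1 < Q_2, and a target value phi with Q_{>=3} < phi. Consider maximizing (Q_2 + Q_{>=3})(r_1 + r_2) + Q_1 r_1 r_2 over (r_1, r_2) in [0,1]^2 subject to r_1 r_2 (Q_1 - Q_2) + (r_1 + r_2) Q_2 = phi - Q_{>=3}. If the feasible set is nonempty, then any maximizer satisfies r_1 = r_2. -/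
/-!
Write `s = r₁ + r₂` and `p = r₁ r₂`. The constraint is linear in `(s, p)`, so along it the
objective is an increasing affine function of `s`; a maximizer therefore maximizes `r₁ + r₂`
on the constraint curve. Since `p < s² / 4` off the diagonal and `m ↦ 2 Q₂ m - (Q₂ - Q₁) m²`
is increasing on `[0, 1]`, every off-diagonal feasible point has a smaller sum than the
feasible diagonal point, which exists by the intermediate value theorem.
-/

namespace MinRevenue

def constraint (Q₁ Q₂ x y : ℝ) : ℝ := x * y * (Q₁ - Q₂) + (x + y) * Q₂

def objective (Q₁ Q₂ Q₃ x y : ℝ) : ℝ := (Q₂ + Q₃) * (x + y) + Q₁ * (x * y)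

variable {Q₁ Q₂ : ℝ}

theorem constraint_diag_le_of_le {x y t : ℝ} (hQ₁ : 0 ≤ Q₁) (hQ : Q₁ ≤ Q₂)
    (htx : x ≤ t) (hty : y ≤ t) (ht : t ≤ 1) :
    constraint Q₁ Q₂ x y ≤ constraint Q₁ Q₂ t t := by
  unfold constraint
  nlinarith [mul_nonneg (sub_nonneg.2 htx) (sub_nonneg.2 hty),
    mul_nonneg (sub_nonneg.2 ht) (sub_nonneg.2 htx), mul_nonneg (sub_nonneg.2 ht) (sub_nonneg.2 hty)]

theorem exists_constraint_diag_eq {x y : ℝ} (hQ₁ : 0 ≤ Q₁) (hQ : Q₁ ≤ Q₂)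
    (hx : x ∈ Set.Icc (0 : ℝ) 1) (hy : y ∈ Set.Icc (0 : ℝ) 1) :
    ∃ t ∈ Set.Icc (0 : ℝ) 1, constraint Q₁ Q₂ t t = constraint Q₁ Q₂ x y := by
  have hcont : ContinuousOn (fun t => constraint Q₁ Q₂ t t) (Set.Icc 0 1) := by
    unfold constraint; fun_prop
  have hlow : constraint Q₁ Q₂ 0 0 ≤ constraint Q₁ Q₂ x y := by
    have hunion : 0 ≤ x + y - x * y := by linarith [mul_nonneg hy.1 (sub_nonneg.2 hx.2), hx.1]
    calc constraint Q₁ Q₂ 0 0 = 0 := by simp [constraint]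
      _ ≤ Q₁ * (x * y) + Q₂ * (x + y - x * y) :=
        add_nonneg (mul_nonneg hQ₁ (mul_nonneg hx.1 hy.1)) (mul_nonneg (hQ₁.trans hQ) hunion)
      _ = constraint Q₁ Q₂ x y := by unfold constraint; ring
  have hhigh := constraint_diag_le_of_le hQ₁ hQ hx.2 hy.2 le_rfl
  exact intermediate_value_Icc zero_le_one hcont ⟨hlow, hhigh⟩

theorem add_lt_of_constraint_eq_diag {x y t : ℝ} (hQ₁ : 0 ≤ Q₁) (hQ : Q₁ < Q₂)
    (hx : x ∈ Set.Icc (0 : ℝ) 1) (hy : y ∈ Set.Icc (0 : ℝ) 1) (ht : t ∈ Set.Icc (0 : ℝ) 1)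
    (heq : constraint Q₁ Q₂ x y = constraint Q₁ Q₂ t t) (hne : x ≠ y) :
    x + y < 2 * t := by
  set m := (x + y) / 2 with hm
  have hprod : x * y < m ^ 2 := by
    have : 0 < (x - y) ^ 2 := by positivity [sub_ne_zero.2 hne]
    rw [hm]; nlinarith
  have hdiff : constraint Q₁ Q₂ t t - constraint Q₁ Q₂ x y
      = (t - m) * (2 * Q₂ - (Q₂ - Q₁) * (t + m)) - (Q₂ - Q₁) * (m ^ 2 - x * y) := by
    unfold constraint; ring
  by_contra! hle
  have hslope : 0 ≤ 2 * Q₂ - (Q₂ - Q₁) * (t + m) := by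
    have := mul_le_mul_of_nonneg_left (show t + m ≤ 2 by linarith [ht.2, hx.2, hy.2])
      (sub_pos.2 hQ).le
    linarith
  have : (t - m) * (2 * Q₂ - (Q₂ - Q₁) * (t + m)) ≤ 0 :=
    mul_nonpos_of_nonpos_of_nonneg (by linarith) hslope
  linarith [mul_pos (sub_pos.2 hQ) (sub_pos.2 hprod)]

theorem add_le_of_objective_le {Q₃ x y u v : ℝ} (hQ₁ : 0 < Q₁) (hQ₃ : 0 ≤ Q₃) (hQ : Q₁ < Q₂)
    (heq : constraint Q₁ Q₂ x y = constraint Q₁ Q₂ u v)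
    (hle : objective Q₁ Q₂ Q₃ x y ≤ objective Q₁ Q₂ Q₃ u v) :
    x + y ≤ u + v := by
  have hslope : 0 < (Q₂ + Q₃) * (Q₂ - Q₁) + Q₁ * Q₂ := by
    have : 0 < Q₂ := hQ₁.trans hQ
    have : 0 < Q₂ - Q₁ := sub_pos.2 hQ
    positivity
  have hlin : ((Q₂ + Q₃) * (Q₂ - Q₁) + Q₁ * Q₂) * ((u + v) - (x + y))
      = (Q₂ - Q₁) * (objective Q₁ Q₂ Q₃ u v - objective Q₁ Q₂ Q₃ x y) := by
    unfold constraint at heq; unfold objective; linear_combination (-Q₁) * heq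
  have hprod : 0 ≤ ((Q₂ + Q₃) * (Q₂ - Q₁) + Q₁ * Q₂) * ((u + v) - (x + y)) := by
    rw [hlin]; exact mul_nonneg (sub_pos.2 hQ).le (sub_nonneg.2 hle)
  exact sub_nonneg.1 (nonneg_of_mul_nonneg_right hprod hslope)

end MinRevenue

theorem stmt_15_general
    (Q₁ Q₂ Q₃ φ : ℝ) (hQ₁ : 0 < Q₁) (hQ₃ : 0 ≤ Q₃)
    (hlt : Q₁ < Q₂) :
    ∀ r : ℝ × ℝ,
      (r.1 ∈ Set.Icc (0:ℝ) 1 ∧ r.2 ∈ Set.Icc (0:ℝ) 1 ∧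
        r.1 * r.2 * (Q₁ - Q₂) + (r.1 + r.2) * Q₂ = φ - Q₃) →
      (∀ s : ℝ × ℝ,
        (s.1 ∈ Set.Icc (0:ℝ) 1 ∧ s.2 ∈ Set.Icc (0:ℝ) 1 ∧
          s.1 * s.2 * (Q₁ - Q₂) + (s.1 + s.2) * Q₂ = φ - Q₃) →
        (Q₂ + Q₃) * (s.1 + s.2) + Q₁ * (s.1 * s.2)
          ≤ (Q₂ + Q₃) * (r.1 + r.2) + Q₁ * (r.1 * r.2)) →
      r.1 = r.2 := by
  rintro ⟨x, y⟩ ⟨hx, hy, hxy⟩ hmax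
  by_contra hne
  obtain ⟨t, ht, htt⟩ := MinRevenue.exists_constraint_diag_eq hQ₁.le hlt.le hx hy
  have hsum_lt : x + y < 2 * t :=
    MinRevenue.add_lt_of_constraint_eq_diag hQ₁.le hlt hx hy ht htt.symm hne
  have hsum_ge : t + t ≤ x + y :=
    MinRevenue.add_le_of_objective_le hQ₁ hQ₃ hlt htt (hmax (t, t) ⟨ht, ht, htt.trans hxy⟩)
  linarith

/-- Case II(a) of the Min-Revenue program: fix `Q₁, Q₂ > 0` with `Q₁ < Q₂`, `Q₃ ≥ 0`, and a
target `φ > Q₃`. Consider maximizing `(Q₂ + Q₃)(r₁ + r₂) + Q₁ r₁ r₂` over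
`(r₁, r₂) ∈ [0,1]²` subject to `r₁ r₂ (Q₁ - Q₂) + (r₁ + r₂) Q₂ = φ - Q₃`.
Any maximizer satisfies `r₁ = r₂`. -/
theorem stmt_15 (k : ℕ) (hk : 0 < k)
    (Q₁ Q₂ Q₃ φ : ℝ) (hQ₁ : 0 < Q₁) (hQ₂ : 0 < Q₂) (hQ₃ : 0 ≤ Q₃)
    (hlt : Q₁ < Q₂) (hφ : Q₃ < φ) :
    ∀ r : ℝ × ℝ,
      (r.1 ∈ Set.Icc (0:ℝ) 1 ∧ r.2 ∈ Set.Icc (0:ℝ) 1 ∧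
        r.1 * r.2 * (Q₁ - Q₂) + (r.1 + r.2) * Q₂ = φ - Q₃) →
      (∀ s : ℝ × ℝ,
        (s.1 ∈ Set.Icc (0:ℝ) 1 ∧ s.2 ∈ Set.Icc (0:ℝ) 1 ∧
          s.1 * s.2 * (Q₁ - Q₂) + (s.1 + s.2) * Q₂ = φ - Q₃) →
        (Q₂ + Q₃) * (s.1 + s.2) + Q₁ * (s.1 * s.2)
          ≤ (Q₂ + Q₃) * (r.1 + r.2) + Q₁ * (r.1 * r.2)) →
      r.1 = r.2 :=
  stmt_15_general Q₁ Q₂ Q₃ φ hQ₁ hQ₃ hlt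
end

section
/- Let v_1,...,v_n be independent nonnegative random variables, p >= 0, k a positive integer, and X_p = |{t : v_t >= p}|. Let Welfare(p) be the expected total value of purchasers in the sequential posted-price process with k units (any fixed arrival order). Then Welfare(p) >= min(E[min(X_p,k)]/k, P[X_p <= k-1]) * E[max_{|S|<=k} sum_{t in S} v_t]. -/
/-! Write each purchaser's value as `p + (v t - p)⁺`. The price part is at least
`p · min(X_p, k)`, since either every buyer with value at least `p` buys or all `k` units are
sold. Buyer `t` collects the surplus `(v t - p)⁺` whenever fewer than `k` earlier buyers have
value at least `p`; this event depends only on earlier values, so it is independent of `v t`,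
and it contains `{X_p ≤ k - 1}`. On the other side, any `k` buyers have total value at most
`p k + ∑ t, (v t - p)⁺`, and multiplying this bound by the minimum of the two ratios gives at
most `p E[min(X_p, k)] + P[X_p ≤ k - 1] ∑ t, E[(v t - p)⁺]`. -/

open MeasureTheory ProbabilityTheory Finset

theorem min_div_mul_add_le {a q p c T : ℝ} (ha : 0 ≤ a) (hp : 0 ≤ p)
    (hc : 0 ≤ c) (hT : 0 ≤ T) : min (a / c) q * (p * c + T) ≤ p * a + q * T := by
  have hdiv : a / c * (p * c) ≤ p * a := by
    rcases hc.eq_or_lt with rfl | hc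
    · simpa using mul_nonneg hp ha
    · exact (by field_simp : a / c * (p * c) = p * a).le
  calc min (a / c) q * (p * c + T) = min (a / c) q * (p * c) + min (a / c) q * T := mul_add _ _ _
    _ ≤ a / c * (p * c) + q * T := by gcongr; exacts [min_le_left _ _, min_le_right _ _]
    _ ≤ p * a + q * T := by linarith

theorem measurable_card_filter {Ω ι : Type*} [Fintype ι] {m : MeasurableSpace Ω}
    (q : ι → Ω → Prop) [∀ i, DecidablePred (q i)] (hq : ∀ i, MeasurableSet[m] {ω | q i ω}) :
    Measurable[m] fun ω => #{i | q i ω} := by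
  simp_rw [card_filter]
  exact Finset.measurable_sum _ fun i _ => Measurable.ite (hq i) measurable_const measurable_const

theorem integrable_sum_of_measurableSet_mem {Ω ι : Type*} [Fintype ι] {mΩ : MeasurableSpace Ω}
    {μ : Measure Ω} {f : ι → Ω → ℝ} {P : Ω → Finset ι} (hf : ∀ t, Integrable (f t) μ)
    (hP : ∀ t, MeasurableSet {ω | t ∈ P ω}) : Integrable (fun ω => ∑ t ∈ P ω, f t ω) μ := by
  classical
  have hsum : (fun ω => ∑ t ∈ P ω, f t ω) = fun ω => ∑ t, {ω | t ∈ P ω}.indicator (f t) ω := by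
    ext ω
    simp [Set.indicator_apply, sum_ite_mem]
  rw [hsum]
  exact integrable_finsetSum _ fun t _ => (hf t).indicator (hP t)

namespace ProbabilityTheory

variable {Ω ι : Type*} {mΩ : MeasurableSpace Ω} {μ : Measure Ω}

theorem iIndepFun.setIntegral_comp_eq_mul {β : Type*} [MeasurableSpace β] {v : ι → Ω → β}
    (hindep : iIndepFun v μ) (hv : ∀ i, Measurable (v i)) {S : Set ι} {t : ι} (ht : t ∉ S)
    {A : Set Ω} (hA : MeasurableSet[⨆ s ∈ S, MeasurableSpace.comap (v s) inferInstance] A)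
    {f : β → ℝ} (hf : Measurable f) :
    ∫ ω in A, f (v t ω) ∂μ = μ.real A * ∫ ω, f (v t ω) ∂μ := by
  have hle : ∀ i, MeasurableSpace.comap (v i) inferInstance ≤ mΩ := fun i => (hv i).comap_le
  have hpast := indep_iSup_of_disjoint hle hindep.iIndep (Set.disjoint_singleton_right.2 ht)
  rw [_root_.iSup_singleton] at hpast
  exact hpast.setIntegral_eq_mul (iSup₂_le fun i _ => hle i) (hv t).aemeasurable hA
    hf.aestronglyMeasurable

end ProbabilityTheory

namespace PostedPrice

section Purchases

variable {ι : Type*} [LinearOrder ι]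

def IsPurchaseSet (x : ι → ℝ) (p : ℝ) (k : ℕ) (P : Finset ι) : Prop :=
  ∀ t, t ∈ P ↔ p ≤ x t ∧ #{s ∈ P | s < t} ≤ k - 1

variable [Fintype ι] {x : ι → ℝ} {p : ℝ} {k : ℕ} {P : Finset ι}

theorem IsPurchaseSet.mem (hP : IsPurchaseSet x p k P) {t : ι} (ht : p ≤ x t)
    (hbefore : #{s | s < t ∧ p ≤ x s} ≤ k - 1) : t ∈ P := by
  refine (hP t).2 ⟨ht, (card_le_card fun s hs => ?_).trans hbefore⟩
  obtain ⟨hsP, hst⟩ := mem_filter.1 hs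
  exact mem_filter.2 ⟨mem_univ s, hst, ((hP s).1 hsP).1⟩

theorem IsPurchaseSet.min_card_le_card (hP : IsPurchaseSet x p k P) :
    min #{t | p ≤ x t} k ≤ #P := by
  by_cases hsold : #P ≤ k - 1
  · refine (min_le_left _ _).trans (card_le_card fun t ht => ?_)
    exact (hP t).2 ⟨(mem_filter.1 ht).2, (card_le_card (filter_subset _ _)).trans hsold⟩
  · omega

theorem IsPurchaseSet.mul_min_card_add_sum_le (hP : IsPurchaseSet x p k P) (hp : 0 ≤ p) :
    p * min #{t | p ≤ x t} k
        + ∑ t, (if #{s | s < t ∧ p ≤ x s} ≤ k - 1 then (x t - p)⁺ else 0)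
      ≤ ∑ t ∈ P, x t := by
  have hterm : ∀ t, (if #{s | s < t ∧ p ≤ x s} ≤ k - 1 then (x t - p)⁺ else 0)
      ≤ if t ∈ P then x t - p else 0 := by
    intro t
    have hrhs : 0 ≤ if t ∈ P then x t - p else 0 := by
      split_ifs with htP
      exacts [sub_nonneg.2 ((hP t).1 htP).1, le_rfl]
    by_cases hbefore : #{s | s < t ∧ p ≤ x s} ≤ k - 1
    · by_cases ht : p ≤ x t
      · simp [hbefore, hP.mem ht hbefore, ht]
      · simpa [hbefore, posPart_of_nonpos (by linarith : x t - p ≤ 0)] using hrhs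
    · simpa [hbefore] using hrhs
  calc p * min #{t | p ≤ x t} k
          + ∑ t, (if #{s | s < t ∧ p ≤ x s} ≤ k - 1 then (x t - p)⁺ else 0)
        ≤ p * #P + ∑ t, (if t ∈ P then x t - p else 0) := by
        gcongr with t
        · exact_mod_cast hP.min_card_le_card
        · exact hterm t
    _ = ∑ t ∈ P, x t := by
        rw [sum_ite_mem, univ_inter, sum_sub_distrib, sum_const, nsmul_eq_mul]
        ring

end Purchases

section Benchmark

variable {ι : Type*} [Fintype ι] {p : ℝ}

theorem iSup_sum_nonneg (x : ι → ℝ) (k : ℕ) :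
    0 ≤ ⨆ S : {S : Finset ι // #S ≤ k}, ∑ t ∈ S.1, x t :=
  le_ciSup_of_le (Set.finite_range _).bddAbove ⟨∅, by simp⟩ (by simp)

theorem iSup_sum_le_mul_add_sum_posPart (x : ι → ℝ) (hp : 0 ≤ p) (k : ℕ) :
    ⨆ S : {S : Finset ι // #S ≤ k}, ∑ t ∈ S.1, x t ≤ p * k + ∑ t, (x t - p)⁺ := by
  have : Nonempty {S : Finset ι // #S ≤ k} := ⟨⟨∅, by simp⟩⟩
  refine ciSup_le fun S => ?_
  calc ∑ t ∈ S.1, x t ≤ ∑ t ∈ S.1, (p + (x t - p)⁺) :=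
        sum_le_sum fun t _ => by linarith [le_posPart (x t - p)]
    _ = p * #S.1 + ∑ t ∈ S.1, (x t - p)⁺ := by
        rw [sum_add_distrib, sum_const, nsmul_eq_mul, mul_comm]
    _ ≤ p * k + ∑ t, (x t - p)⁺ := by
        gcongr
        · exact_mod_cast S.2
        · exact subset_univ _

end Benchmark

section Probability

variable {Ω ι : Type*} {mΩ : MeasurableSpace Ω} {μ : Measure Ω} [Fintype ι] {v : ι → Ω → ℝ}
  {p : ℝ}

theorem integral_iSup_sum_le [IsProbabilityMeasure μ] (hint : ∀ t, Integrable (v t) μ)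
    (hp : 0 ≤ p) (k : ℕ) :
    ∫ ω, (⨆ S : {S : Finset ι // #S ≤ k}, ∑ t ∈ S.1, v t ω) ∂μ
      ≤ p * k + ∑ t, ∫ ω, (v t ω - p)⁺ ∂μ := by
  have hw : ∀ t, Integrable (fun ω => (v t ω - p)⁺) μ := fun t =>
    ((hint t).sub (integrable_const p)).pos_part
  calc ∫ ω, (⨆ S : {S : Finset ι // #S ≤ k}, ∑ t ∈ S.1, v t ω) ∂μ
      ≤ ∫ ω, (p * k + ∑ t, (v t ω - p)⁺) ∂μ :=
        integral_mono_of_nonneg (ae_of_all _ fun ω => iSup_sum_nonneg _ k)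
          ((integrable_const _).add (integrable_finsetSum _ fun t _ => hw t))
          (ae_of_all _ fun ω => iSup_sum_le_mul_add_sum_posPart _ hp k)
    _ = p * k + ∑ t, ∫ ω, (v t ω - p)⁺ ∂μ := by
        rw [integral_add (integrable_const _) (integrable_finsetSum _ fun t _ => hw t),
          integral_const, integral_finsetSum _ fun t _ => hw t, probReal_univ, one_smul]

variable [LinearOrder ι] {k : ℕ}

theorem measurableSet_card_before_le (t : ι) :
    MeasurableSet[⨆ s ∈ Set.Iio t, MeasurableSpace.comap (v s) inferInstance]
      {ω | #{s | s < t ∧ p ≤ v s ω} ≤ k - 1} := by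
  refine measurable_card_filter (fun s ω => s < t ∧ p ≤ v s ω) (fun s => ?_) measurableSet_Iic
  by_cases hs : s < t
  · simp only [hs, true_and]
    exact le_iSup₂ (f := fun s (_ : s ∈ Set.Iio t) => MeasurableSpace.comap (v s) inferInstance)
      s hs _ (measurableSet_le measurable_const (comap_measurable (v s)))
  · simp [hs]

theorem le_integral_sum_purchases [IsFiniteMeasure μ] (hv : ∀ t, Measurable (v t))
    (hint : ∀ t, Integrable (v t) μ) (hindep : iIndepFun v μ) (hp : 0 ≤ p)
    {purchases : Ω → Finset ι} (hP : ∀ ω, IsPurchaseSet (fun t => v t ω) p k (purchases ω))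
    (hPmeas : ∀ t, MeasurableSet {ω | t ∈ purchases ω}) :
    p * ∫ ω, (↑(min #{t | p ≤ v t ω} k) : ℝ) ∂μ
        + ∑ t, μ.real {ω | #{s | s < t ∧ p ≤ v s ω} ≤ k - 1} * ∫ ω, (v t ω - p)⁺ ∂μ
      ≤ ∫ ω, ∑ t ∈ purchases ω, v t ω ∂μ := by
  set A : ι → Set Ω := fun t => {ω | #{s | s < t ∧ p ≤ v s ω} ≤ k - 1} with hA_def
  have hA : ∀ t, MeasurableSet (A t) := fun t =>
    iSup₂_le (fun s _ => (hv s).comap_le) _ (measurableSet_card_before_le t)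
  have hw : ∀ t, Integrable (fun ω => (v t ω - p)⁺) μ := fun t =>
    ((hint t).sub (integrable_const p)).pos_part
  have hgain : ∀ t, Integrable ((A t).indicator fun ω => (v t ω - p)⁺) μ := fun t =>
    (hw t).indicator (hA t)
  have hmin : Integrable (fun ω => (↑(min #{t | p ≤ v t ω} k) : ℝ)) μ := by
    have hcard := measurable_card_filter (fun t ω => p ≤ v t ω)
      fun t => measurableSet_le measurable_const (hv t)
    have hmin_meas : Measurable fun ω => (↑(min #{t | p ≤ v t ω} k) : ℝ) :=
      (measurable_from_nat (f := fun n => ((min n k : ℕ) : ℝ))).comp hcard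
    refine .of_bound hmin_meas.aestronglyMeasurable k (ae_of_all _ fun ω => ?_)
    rw [Real.norm_eq_abs, abs_of_nonneg (Nat.cast_nonneg _)]
    exact_mod_cast min_le_right _ k
  have hsplit : ∀ t, ∫ ω, (A t).indicator (fun ω => (v t ω - p)⁺) ω ∂μ
      = μ.real (A t) * ∫ ω, (v t ω - p)⁺ ∂μ := fun t => by
    rw [integral_indicator (hA t)]
    exact iIndepFun.setIntegral_comp_eq_mul hindep hv Set.self_notMem_Iio
      (measurableSet_card_before_le t) ((measurable_id.sub_const p).sup_const 0)
  calc p * ∫ ω, (↑(min #{t | p ≤ v t ω} k) : ℝ) ∂μ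
        + ∑ t, μ.real (A t) * ∫ ω, (v t ω - p)⁺ ∂μ
      = ∫ ω, (p * ↑(min #{t | p ≤ v t ω} k)
          + ∑ t, (A t).indicator (fun ω => (v t ω - p)⁺) ω) ∂μ := by
        rw [integral_add (hmin.const_mul p) (integrable_finsetSum _ fun t _ => hgain t),
          integral_const_mul, integral_finsetSum _ fun t _ => hgain t]
        simp only [hsplit]
    _ ≤ ∫ ω, ∑ t ∈ purchases ω, v t ω ∂μ :=
        integral_mono ((hmin.const_mul p).add (integrable_finsetSum _ fun t _ => hgain t))
          (integrable_sum_of_measurableSet_mem hint hPmeas) fun ω => by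
            simpa only [Set.indicator_apply, hA_def, Set.mem_ofPred_eq]
              using (hP ω).mul_min_card_add_sum_le hp

end Probability

end PostedPrice

theorem stmt_18_general {Ω : Type*} [MeasurableSpace Ω] (μ : Measure Ω) [IsProbabilityMeasure μ]
    (n k : ℕ)
    (v : Fin n → Ω → ℝ) (hmeas : ∀ t, Measurable (v t))
    (hint : ∀ t, Integrable (v t) μ)
    (hindep : iIndepFun v μ)
    (p : ℝ) (hp : 0 ≤ p)
    (purchases : Ω → Finset (Fin n))
    (hpmeas : ∀ t : Fin n, MeasurableSet {ω | t ∈ purchases ω})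
    (hchar : ∀ ω t, t ∈ purchases ω ↔
      (p ≤ v t ω ∧ ((purchases ω).filter (fun s => s < t)).card ≤ k - 1)) :
    min ((∫ ω, (↑(min ((univ : Finset (Fin n)).filter (fun t => p ≤ v t ω)).card k) : ℝ) ∂μ)
          / k)
        ((μ {ω | ((univ : Finset (Fin n)).filter (fun t => p ≤ v t ω)).card ≤ k - 1}).toReal)
      * (∫ ω, (⨆ S : {S : Finset (Fin n) // S.card ≤ k}, ∑ t ∈ S.1, v t ω) ∂μ)
    ≤ ∫ ω, ∑ t ∈ purchases ω, v t ω ∂μ := by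
  set A := ∫ ω, (↑(min #{t | p ≤ v t ω} k) : ℝ) ∂μ
  set q := (μ {ω | #{t | p ≤ v t ω} ≤ k - 1}).toReal
  set T := ∑ t, ∫ ω, (v t ω - p)⁺ ∂μ
  have hq_le : ∀ t, q ≤ μ.real {ω | #{s | s < t ∧ p ≤ v s ω} ≤ k - 1} := fun t =>
    measureReal_mono fun ω hω =>
      (card_le_card (monotone_filter_right _ fun _ _ h => h.2)).trans hω
  have hgain_nonneg : ∀ t, 0 ≤ ∫ ω, (v t ω - p)⁺ ∂μ := fun t =>
    integral_nonneg fun ω => posPart_nonneg _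
  have hA : 0 ≤ A := integral_nonneg fun ω => Nat.cast_nonneg _
  calc min (A / k) q * ∫ ω, (⨆ S : {S : Finset (Fin n) // #S ≤ k}, ∑ t ∈ S.1, v t ω) ∂μ
      ≤ min (A / k) q * (p * k + T) :=
        mul_le_mul_of_nonneg_left (PostedPrice.integral_iSup_sum_le hint hp k)
          (le_min (div_nonneg hA k.cast_nonneg) ENNReal.toReal_nonneg)
    _ ≤ p * A + q * T :=
        min_div_mul_add_le hA hp k.cast_nonneg (sum_nonneg fun t _ => hgain_nonneg t)
    _ ≤ p * A + ∑ t, μ.real {ω | #{s | s < t ∧ p ≤ v s ω} ≤ k - 1} * ∫ ω, (v t ω - p)⁺ ∂μ := by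
        rw [mul_sum]
        exact add_le_add le_rfl
          (sum_le_sum fun t _ => mul_le_mul_of_nonneg_right (hq_le t) (hgain_nonneg t))
    _ ≤ ∫ ω, ∑ t ∈ purchases ω, v t ω ∂μ :=
        PostedPrice.le_integral_sum_purchases hmeas hint hindep hp hchar hpmeas

/-- Welfare-to-optimum lower bound for any static price (Lemma 3.1).
Buyers `t : Fin n` with independent nonnegative values `v t` arrive in order; in the
sequential posted-price process with `k` units at price `p ≥ 0`, buyer `t` purchases iff
`v t ≥ p` and fewer than `k` units have been sold so far. With `X_p` the number of buyers
whose value is at least `p`, the expected welfare is at least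
`min(E[min(X_p,k)]/k, P[X_p ≤ k-1])` times the expected sum of the `k` largest values. -/
theorem stmt_18 {Ω : Type*} [MeasurableSpace Ω] (μ : Measure Ω) [IsProbabilityMeasure μ]
    (n k : ℕ) (hk : 0 < k)
    (v : Fin n → Ω → ℝ) (hmeas : ∀ t, Measurable (v t))
    (hint : ∀ t, Integrable (v t) μ)
    (hnn : ∀ t ω, 0 ≤ v t ω)
    (hindep : iIndepFun v μ)
    (p : ℝ) (hp : 0 ≤ p)
    (purchases : Ω → Finset (Fin n))
    (hpmeas : ∀ t : Fin n, MeasurableSet {ω | t ∈ purchases ω})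
    (hchar : ∀ ω t, t ∈ purchases ω ↔
      (p ≤ v t ω ∧ ((purchases ω).filter (fun s => s < t)).card ≤ k - 1)) :
    min ((∫ ω, (↑(min ((univ : Finset (Fin n)).filter (fun t => p ≤ v t ω)).card k) : ℝ) ∂μ)
          / k)
        ((μ {ω | ((univ : Finset (Fin n)).filter (fun t => p ≤ v t ω)).card ≤ k - 1}).toReal)
      * (∫ ω, (⨆ S : {S : Finset (Fin n) // S.card ≤ k}, ∑ t ∈ S.1, v t ω) ∂μ)
    ≤ ∫ ω, ∑ t ∈ purchases ω, v t ω ∂μ :=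
  stmt_18_general μ n k v hmeas hint hindep p hp purchases hpmeas hchar
end
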